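/- Performing a primary spoke operation on the wheel graph W_4 results in a graph isomorphic to W_5, and for every n ≥ 5, performing a secondary spoke operation on the wheel graph W_n (with x chosen as the hub, i.e., the unique vertex of degree greater than 3) results in a graph isomorphic to W_{n+1}. -/

import Mathlib

open SimpleGraph

/-- The degree of a vertex, as the cardinality of its neighbor set. -/
noncomputable def vdeg {V : Type*} (G : SimpleGraph V) (v : V) : ℕ :=
  (G.neighborSet v).ncard

/-- The minimum degree of a graph. -/
noncomputable def minDeg {V : Type*} (G : SimpleGraph V) : ℕ :=
  sInf (Set.range (vdeg G))

/-- `ν(G)`: the number of vertices of minimum degree. -/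
noncomputable def nu {V : Type*} (G : SimpleGraph V) : ℕ :=
  {v | vdeg G v = minDeg G}.ncard

/-- A family of `m` pairwise independent (i.e. internally vertex-disjoint, pairwise distinct)
paths from `u` to `v`. -/
def IsIndepPathFamily {V : Type*} (G : SimpleGraph V) {u v : V} {m : ℕ}
    (W : Fin m → G.Walk u v) : Prop :=
  (∀ i, (W i).IsPath) ∧ Function.Injective W ∧
    ∀ i j, i ≠ j → ∀ x, x ∈ (W i).support → x ∈ (W j).support → x = u ∨ x = v

/-- A graph on at least `k+1` vertices is uniformly `k`-connected if each pair of its vertices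
is connected by `k` and not more than `k` independent paths. -/
def UniformlyConnected (k : ℕ) {V : Type*} [Fintype V] (G : SimpleGraph V) : Prop :=
  k + 1 ≤ Fintype.card V ∧
    ∀ u v : V, u ≠ v →
      (∃ W : Fin k → G.Walk u v, IsIndepPathFamily G W) ∧
      ∀ m : ℕ, (∃ W : Fin m → G.Walk u v, IsIndepPathFamily G W) → m ≤ k

/-- `k`-connected: more than `k` vertices, and still connected after deleting any fewer
than `k` vertices. -/
def KConnected (k : ℕ) {V : Type*} [Fintype V] (G : SimpleGraph V) : Prop :=
  k < Fintype.card V ∧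
    ∀ S : Finset V, S.card < k → (G.induce {v : V | v ∉ S}).Connected
/-- Hypotheses of the spoke operation: `v`, `w`, `x` are distinct, `vw` is an edge,
and every vertex other than possibly `x` has degree 3. -/
def SpokeHyp {V : Type*} (G : SimpleGraph V) (v w x : V) : Prop :=
  v ≠ w ∧ v ≠ x ∧ w ≠ x ∧ G.Adj v w ∧ ∀ z : V, z ≠ x → vdeg G z = 3

/-- The spoke operation: `G + y − vw + vy + wy + xy`, where the new vertex `y`
is `Sum.inr ()`. -/
def SpokeGraph {V : Type*} (G : SimpleGraph V) (v w x : V) : SimpleGraph (V ⊕ Unit) :=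
  SimpleGraph.fromRel (fun p q =>
    match p, q with
    | Sum.inl a, Sum.inl b => G.Adj a b ∧ ¬(a = v ∧ b = w) ∧ ¬(a = w ∧ b = v)
    | Sum.inl a, Sum.inr _ => a = v ∨ a = w ∨ a = x
    | Sum.inr _, _ => False)
/-- `Wheel m` is the wheel graph on `m + 1` vertices (i.e. `W_{m+1}`): a hub `none` adjacent
to all the vertices of a cycle on the `m` rim vertices `some i`. -/
def Wheel (m : ℕ) : SimpleGraph (Option (Fin m)) :=
  SimpleGraph.fromRel (fun p q =>
    match p, q with
    | none, some _ => True
    | some i, some j => j.val = (i.val + 1) % m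
    | _, _ => False)

/-!
Removing the rim edge `vw` of a wheel and joining a new vertex `y` to `v`, `w` and the hub just
subdivides that rim edge by `y`, which yields the next wheel. The rim of a wheel is a cycle, so a
rotation moves `vw` to the edge between the rim vertices `-1` and `0`, where the new vertex becomes
the last rim vertex. In the secondary case the hub of `W_n` has degree `n - 1 > 3`, so it is `x`;
in the primary case `W_4 = K_4`, and a transposition moves `x` to the hub.
-/

section SpokeGraph

variable {V W : Type*} {G : SimpleGraph V} {H : SimpleGraph W} {v w x : V}

@[simp] lemma spokeGraph_adj_inl_inl {a b : V} :
    (SpokeGraph G v w x).Adj (.inl a) (.inl b) ↔ G.Adj a b ∧ s(a, b) ≠ s(v, w) := by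
  simp only [SpokeGraph, fromRel_adj, ne_eq, Sum.inl.injEq, Sym2.eq_iff]
  constructor
  · rintro ⟨-, h | h⟩
    · tauto
    · exact ⟨h.1.symm, by tauto⟩
  · rintro ⟨h, h'⟩
    exact ⟨h.ne, .inl ⟨h, by tauto⟩⟩

@[simp] lemma spokeGraph_adj_inl_inr {a : V} {u : Unit} :
    (SpokeGraph G v w x).Adj (.inl a) (.inr u) ↔ a = v ∨ a = w ∨ a = x := by
  simp [SpokeGraph]

@[simp] lemma spokeGraph_adj_inr_inl {a : V} {u : Unit} :
    (SpokeGraph G v w x).Adj (.inr u) (.inl a) ↔ a = v ∨ a = w ∨ a = x := by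
  simp [SpokeGraph]

lemma spokeGraph_comm : SpokeGraph G v w x = SpokeGraph G w v x := by
  ext (a | _) (b | _) <;> simp [Sym2.eq_swap, or_left_comm]

def SimpleGraph.Iso.spokeGraph (φ : G ≃g H) (v w x : V) :
    SpokeGraph G v w x ≃g SpokeGraph H (φ v) (φ w) (φ x) where
  toEquiv := Equiv.sumCongr φ.toEquiv (Equiv.refl Unit)
  map_rel_iff' {p q} := by
    rcases p with a | _ <;> rcases q with b | _ <;> simp [φ.injective.eq_iff, φ.map_adj_iff]

end SpokeGraph

def Fin.optionSumUnitEquiv (k : ℕ) : Option (Fin k) ⊕ Unit ≃ Option (Fin (k + 1)) where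
  toFun := Sum.elim (Option.map Fin.castSucc) fun _ => some (Fin.last k)
  invFun p := p.elim (.inl none) (Fin.lastCases (.inr ()) fun i => .inl (some i))
  left_inv := by rintro ((_ | i) | _) <;> simp
  right_inv := by
    rintro (_ | j)
    · rfl
    · induction j using Fin.lastCases <;> simp

namespace Wheel

variable {m : ℕ}

@[simp] lemma adj_none_some (i : Fin m) : (Wheel m).Adj none (some i) := by
  simp [Wheel]

@[simp] lemma adj_some_none (i : Fin m) : (Wheel m).Adj (some i) none := by
  simp [Wheel]

lemma adj_some_some_iff [NeZero m] {i j : Fin m} :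
    (Wheel m).Adj (some i) (some j) ↔ i ≠ j ∧ (j = i + 1 ∨ i = j + 1) := by
  have h (a b : Fin m) : (b : ℕ) = ((a : ℕ) + 1) % m ↔ b = a + 1 := by
    rw [Fin.ext_iff, Fin.val_add, Fin.val_one', Nat.add_mod_mod]
  simp [Wheel, h]

lemma vdeg_none : vdeg (Wheel m) none = m := by
  have h : (Wheel m).neighborSet none = Set.range some := by
    ext (_ | _) <;> simp
  rw [vdeg, h, Set.ncard_range_of_injective (Option.some_injective _), Nat.card_eq_fintype_card,
    Fintype.card_fin]

lemma three_eq_top : Wheel 3 = ⊤ := by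
  ext p q
  rcases p with _ | i <;> rcases q with _ | j
  · simp
  · simp
  · simp
  · rw [adj_some_some_iff]; revert i j; decide

def rotate [NeZero m] (k : Fin m) : Wheel m ≃g Wheel m where
  toEquiv := Equiv.optionCongr (Equiv.addRight k)
  map_rel_iff' {p q} := by
    rcases p with _ | i <;> rcases q with _ | j
    · simp
    · simp
    · simp
    · simp [adj_some_some_iff, add_right_comm _ k 1]

@[simp] lemma rotate_some [NeZero m] (k i : Fin m) : rotate k (some i) = some (i + k) :=
  rfl

@[simp] lemma rotate_none [NeZero m] (k : Fin m) : rotate k none = none :=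
  rfl

def swapIsoThree (x y : Option (Fin 3)) : Wheel 3 ≃g Wheel 3 where
  toEquiv := Equiv.swap x y
  map_rel_iff' := by simp [three_eq_top]

def spokeGraphIso (k : ℕ) (hk : 2 ≤ k) :
    SpokeGraph (Wheel (k + 1)) (some (-1)) (some 0) none ≃g Wheel (k + 2) where
  toEquiv := Fin.optionSumUnitEquiv (k + 1)
  map_rel_iff' {p q} := by
    rcases p with (_ | i) | _ <;> rcases q with (_ | j) | _ <;>
      simp only [Fin.optionSumUnitEquiv, Equiv.coe_fn_mk, Sum.elim_inl, Sum.elim_inr,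
        Option.map_none, Option.map_some, spokeGraph_adj_inl_inl, spokeGraph_adj_inl_inr,
        spokeGraph_adj_inr_inl, adj_some_some_iff, adj_none_some, adj_some_none,
        SimpleGraph.irrefl, Sym2.eq_iff, Option.some_inj, Fin.ext_iff, Fin.val_add_one,
        Fin.val_castSucc, Fin.val_last, Fin.coe_neg_one, Fin.val_zero, ne_eq, reduceCtorEq,
        or_false, or_true, and_true, and_false, false_and, not_false_eq_true] <;>
      (try split_ifs) <;> omega

lemma nonempty_spokeGraph_iso (hm : 3 ≤ m) {v w : Option (Fin m)} (hv : v ≠ none)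
    (hw : w ≠ none) (hadj : (Wheel m).Adj v w) :
    Nonempty (SpokeGraph (Wheel m) v w none ≃g Wheel (m + 1)) := by
  obtain ⟨k, rfl⟩ : ∃ k, m = k + 1 := ⟨m - 1, by omega⟩
  obtain ⟨a, rfl⟩ := Option.ne_none_iff_exists'.1 hv
  obtain ⟨b, rfl⟩ := Option.ne_none_iff_exists'.1 hw
  clear hv hw
  wlog hab : b = a + 1 generalizing a b
  · rw [spokeGraph_comm]
    exact this b a hadj.symm ((adj_some_some_iff.1 hadj).2.resolve_left hab)
  subst hab
  have e := (rotate (-(a + 1))).spokeGraph (some a) (some (a + 1)) none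
  rw [rotate_some, rotate_some, rotate_none, add_neg_cancel, show a + -(a + 1) = -1 by abel] at e
  exact ⟨e.trans (spokeGraphIso k (by omega))⟩

end Wheel

/-- Performing a primary spoke operation on the wheel `W_4 = Wheel 3` results in a graph
isomorphic to `W_5 = Wheel 4`, and for every `n ≥ 5`, performing a secondary spoke operation
on `W_n = Wheel (n-1)` with `x` the hub (the unique vertex of degree greater than three)
results in a graph isomorphic to `W_{n+1} = Wheel n`. -/
theorem spoke_wheel :
    (∀ v w x : Option (Fin 3), SpokeHyp (Wheel 3) v w x → vdeg (Wheel 3) x = 3 →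
      Nonempty (SpokeGraph (Wheel 3) v w x ≃g Wheel 4)) ∧
    (∀ n : ℕ, 5 ≤ n → ∀ v w x : Option (Fin (n - 1)),
      SpokeHyp (Wheel (n - 1)) v w x → 3 < vdeg (Wheel (n - 1)) x →
      Nonempty (SpokeGraph (Wheel (n - 1)) v w x ≃g Wheel n)) := by
  refine ⟨fun v w x hyp _ => ?_, fun n hn v w x hyp _ => ?_⟩
  · obtain ⟨hne, hvx, hwx, -, -⟩ := hyp
    set σ := Wheel.swapIsoThree x none
    have hσx : σ x = none := Equiv.swap_apply_left x none
    have e := σ.spokeGraph v w x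
    rw [hσx] at e
    refine ⟨e.trans (Wheel.nonempty_spokeGraph_iso le_rfl ?_ ?_ ?_).some⟩
    · exact hσx ▸ σ.injective.ne hvx
    · exact hσx ▸ σ.injective.ne hwx
    · simpa [Wheel.three_eq_top] using σ.injective.ne hne
  · obtain ⟨hvx, hwx, hadj, hdeg⟩ := hyp.2
    obtain ⟨m, rfl⟩ : ∃ m, n = m + 1 := ⟨n - 1, by omega⟩
    obtain rfl : x = none := by
      by_contra hx
      have := hdeg none (Ne.symm hx)
      rw [Wheel.vdeg_none] at this
      omega
    exact Wheel.nonempty_spokeGraph_iso (by omega) hvx hwx hadj
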